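/- The homomorphism distortion satisfies the triangle inequality: for any three vertex-attributed graphs G, G', G'' that are pairwise homomorphically equivalent (i.e., there exists at least one homomorphism in each direction between each pair) and share the same attribute-function codomain, d_HD(G, G') ≤ d_HD(G, G'') + d_HD(G'', G'). -/
import Mathlib


open scoped ENNReal

/-- The attribute distance of a graph homomorphism `φ : G →g G'` between
vertex-attributed graphs with attribute functions `f`, `f'` into a common normed space. -/
noncomputable def attrDist {V V' X : Type*} [NormedAddCommGroup X]
    {G : SimpleGraph V} {G' : SimpleGraph V'}
    (f : V → X) (f' : V' → X) (φ : G →g G') : ℝ≥0∞ :=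
  ⨆ v : V, (‖f v - f' (φ v)‖₊ : ℝ≥0∞)

/-- The homomorphism distortion between two vertex-attributed graphs, with
`inf ∅ = ⊤` handled by working in `ℝ≥0∞`. -/
noncomputable def homDistortion {V V' X : Type*} [NormedAddCommGroup X]
    (G : SimpleGraph V) (G' : SimpleGraph V') (f : V → X) (f' : V' → X) : ℝ≥0∞ :=
  max (⨅ φ : G →g G', attrDist f f' φ) (⨅ φ' : G' →g G, attrDist f' f φ')

lemma attrDist_comp_le {V V' V'' X : Type*} [NormedAddCommGroup X]
    {G : SimpleGraph V} {G' : SimpleGraph V'} {G'' : SimpleGraph V''}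
    (f : V → X) (f' : V' → X) (f'' : V'' → X) (φ : G →g G'') (ψ : G'' →g G') :
    attrDist f f' (ψ.comp φ) ≤ attrDist f f'' φ + attrDist f'' f' ψ := by
  refine iSup_le fun v => ?_
  calc (‖f v - f' (ψ (φ v))‖₊ : ℝ≥0∞)
      = (‖(f v - f'' (φ v)) + (f'' (φ v) - f' (ψ (φ v)))‖₊ : ℝ≥0∞) := by
        congr 1; abel_nf
    _ ≤ (‖f v - f'' (φ v)‖₊ : ℝ≥0∞) + (‖f'' (φ v) - f' (ψ (φ v))‖₊ : ℝ≥0∞) := by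
        rw [← ENNReal.coe_add]; exact_mod_cast nnnorm_add_le _ _
    _ ≤ _ := add_le_add (le_iSup (fun v => (‖f v - f'' (φ v)‖₊ : ℝ≥0∞)) v)
          (le_iSup (fun w => (‖f'' w - f' (ψ w)‖₊ : ℝ≥0∞)) (φ v))

lemma iInf_attr_le {V V' V'' X : Type*} [NormedAddCommGroup X]
    {G : SimpleGraph V} {G' : SimpleGraph V'} {G'' : SimpleGraph V''}
    (f : V → X) (f' : V' → X) (f'' : V'' → X) :
    (⨅ φ : G →g G', attrDist f f' φ) ≤
      (⨅ φ : G →g G'', attrDist f f'' φ) + ⨅ ψ : G'' →g G', attrDist f'' f' ψ := by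
  rw [ENNReal.iInf_add]
  refine le_iInf fun φ => ?_
  rw [ENNReal.add_iInf]
  refine le_iInf fun ψ => ?_
  exact le_trans (iInf_le _ (ψ.comp φ)) (attrDist_comp_le f f' f'' φ ψ)

/-- the triangle inequality for pairwise homomorphically equivalent graphs. -/
theorem homDistortion_triangle
    {V V' V'' X : Type*} [Fintype V] [Fintype V'] [Fintype V''] [NormedAddCommGroup X]
    (G : SimpleGraph V) (G' : SimpleGraph V') (G'' : SimpleGraph V'')
    (f : V → X) (f' : V' → X) (f'' : V'' → X)
    (h1 : Nonempty (G →g G')) (h2 : Nonempty (G' →g G))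
    (h3 : Nonempty (G →g G'')) (h4 : Nonempty (G'' →g G))
    (h5 : Nonempty (G' →g G'')) (h6 : Nonempty (G'' →g G')) :
    homDistortion G G' f f' ≤
      homDistortion G G'' f f'' + homDistortion G'' G' f'' f' := by
  unfold homDistortion
  refine max_le ?_ ?_
  · exact le_trans (iInf_attr_le f f' f'')
      (add_le_add (le_max_left _ _) (le_max_left _ _))
  · refine le_trans (iInf_attr_le (G := G') (G' := G) (G'' := G'') f' f f'') ?_
    rw [add_comm]
    exact add_le_add (le_max_right _ _) (le_max_right _ _)
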